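/- Let G be a group, N a normal subgroup of Z_n(G) with exponent p (every element satisfies x^p = 1), and define λ_i(G) = γ_1(G)^{p^{i-1}} γ_2(G)^{p^{i-2}} ⋯ γ_i(G). Then for all 1 ≤ i ≤ n, [λ_i(G), N, G, …, G] = 1 where G appears n−i times; in particular [N, G, …, G] = 1 with n copies of G. -/

import Mathlib

/-!
By the three subgroups lemma `[γ_j(G), Z_m(G)] ≤ Z_{m-j}(G)`, so for `x ∈ γ_j(G)` and `a ∈ N`
the commutator `[x, a]` lies in `Z_{n-j}(G)`. If `[y, a] ∈ Z_{m+1}(G)` then `[y, a]` is central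
modulo `Z_m(G)`, where `[y^p, a] = [y, a]^p = [y, a^p] = 1`; so each `p`-th power lowers the
level once more and `[x^{p^{i-j}}, a] ∈ Z_{n-i}(G)`. As `Z_{n-i}(G)` is normal, this gives
`[λ_i(G), N] ≤ Z_{n-i}(G)`, which `n - i` further commutations with `G` kill, just as `n` of
them kill `N ≤ Z_n(G)`.
-/

/-- The subgroup generated by `k`-th powers of elements of `N`. -/
def sPow {G : Type*} [Group G] (N : Subgroup G) (k : ℕ) : Subgroup G :=
  Subgroup.closure ((· ^ k) '' (N : Set G))

/-- Iterated commutator `[A, G, …, G]` with `k` copies of `G`. -/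
def itCom {G : Type*} [Group G] (A : Subgroup G) : ℕ → Subgroup G
  | 0 => A
  | k + 1 => ⁅itCom A k, (⊤ : Subgroup G)⁆

/-- The `i`-th term of the lower `p`-series,
`λ_i(G) = γ_1(G)^{p^{i-1}} γ_2(G)^{p^{i-2}} ⋯ γ_i(G)`. -/
def lam (p : ℕ) (G : Type*) [Group G] (i : ℕ) : Subgroup G :=
  ⨆ j ∈ Finset.Icc 1 i, sPow (Subgroup.lowerCentralSeries (⊤ : Subgroup G) (j - 1)) (p ^ (i - j))

open QuotientGroup
open scoped commutatorElement

section CentralCommutator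

variable {H : Type*} [Group H] {y a : H}

lemma commutatorElement_pow_left_of_mem_center (h : ⁅y, a⁆ ∈ Subgroup.center H) :
    ∀ t : ℕ, ⁅y ^ t, a⁆ = ⁅y, a⁆ ^ t
  | 0 => by simp
  | t + 1 => by
    have hconj : y ^ t * ⁅y, a⁆ * (y ^ t)⁻¹ = ⁅y, a⁆ := by
      rw [Subgroup.mem_center_iff.mp h (y ^ t), mul_inv_cancel_right]
    calc ⁅y ^ (t + 1), a⁆ = y ^ t * ⁅y, a⁆ * (y ^ t)⁻¹ * ⁅y ^ t, a⁆ := by group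
      _ = ⁅y, a⁆ ^ (t + 1) := by
        rw [hconj, commutatorElement_pow_left_of_mem_center h t, ← pow_succ']

lemma commutatorElement_pow_right_of_mem_center (h : ⁅y, a⁆ ∈ Subgroup.center H) :
    ∀ t : ℕ, ⁅y, a ^ t⁆ = ⁅y, a⁆ ^ t
  | 0 => by simp
  | t + 1 => by
    have hconj : a * ⁅y, a⁆ ^ t * a⁻¹ = ⁅y, a⁆ ^ t := by
      rw [Subgroup.mem_center_iff.mp (pow_mem h t) a, mul_inv_cancel_right]
    calc ⁅y, a ^ (t + 1)⁆ = ⁅y, a⁆ * (a * ⁅y, a ^ t⁆ * a⁻¹) := by group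
      _ = ⁅y, a⁆ ^ (t + 1) := by
        rw [commutatorElement_pow_right_of_mem_center h t, hconj, ← pow_succ']

end CentralCommutator

namespace Subgroup

variable {G : Type*} [Group G] {W : Subgroup G} [W.Normal]

lemma le_iff_map_mk'_eq_bot {K : Subgroup G} : K ≤ W ↔ K.map (mk' W) = ⊥ := by
  rw [map_eq_bot_iff, ker_mk']

lemma commutator_commutator_le_of_rotate {H₁ H₂ H₃ : Subgroup G}
    (h₁ : ⁅⁅H₂, H₃⁆, H₁⁆ ≤ W) (h₂ : ⁅⁅H₃, H₁⁆, H₂⁆ ≤ W) : ⁅⁅H₁, H₂⁆, H₃⁆ ≤ W := by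
  simp only [le_iff_map_mk'_eq_bot, map_commutator] at h₁ h₂ ⊢
  exact commutator_commutator_eq_bot_of_rotate h₁ h₂

lemma commutator_le_iff_le_comap_centralizer {H K : Subgroup G} :
    ⁅H, K⁆ ≤ W ↔ H ≤ (centralizer (K.map (mk' W))).comap (mk' W) := by
  rw [le_iff_map_mk'_eq_bot, map_commutator,
    commutator_eq_bot_iff_le_centralizer, map_le_iff_le_comap]

lemma commutator_closure_le {S : Set G} {K : Subgroup G}
    (h : ∀ s ∈ S, ∀ a ∈ K, ⁅s, a⁆ ∈ W) : ⁅closure S, K⁆ ≤ W := by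
  rw [commutator_le_iff_le_comap_centralizer, closure_le]
  rintro s hs _ ⟨a, ha, rfl⟩
  have hsa : mk' W ⁅s, a⁆ = 1 := (eq_one_iff _).mpr (h s hs a ha)
  rw [map_commutatorElement, commutatorElement_eq_one_iff_mul_comm] at hsa
  exact hsa.symm

lemma commutator_upperCentralSeries_top_le_sub_one (m : ℕ) :
    ⁅upperCentralSeries G m, ⊤⁆ ≤ upperCentralSeries G (m - 1) := by
  cases m with
  | zero => simp
  | succ m => exact commutator_upperCentralSeries_top_le G m

lemma commutator_lowerCentralSeries_upperCentralSeries_le (j m : ℕ) :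
    ⁅(⊤ : Subgroup G).lowerCentralSeries j, upperCentralSeries G m⁆ ≤
      upperCentralSeries G (m - (j + 1)) := by
  induction j generalizing m with
  | zero =>
    rw [lowerCentralSeries_zero, commutator_comm]
    exact commutator_upperCentralSeries_top_le_sub_one m
  | succ j ih =>
    rw [lowerCentralSeries_succ]
    apply commutator_commutator_le_of_rotate
    · calc ⁅⁅⊤, upperCentralSeries G m⁆, (⊤ : Subgroup G).lowerCentralSeries j⁆
          ≤ ⁅upperCentralSeries G (m - 1), (⊤ : Subgroup G).lowerCentralSeries j⁆ := by
            rw [commutator_comm ⊤]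
            exact commutator_mono (commutator_upperCentralSeries_top_le_sub_one m) le_rfl
        _ ≤ upperCentralSeries G (m - (j + 1 + 1)) := by
            rw [commutator_comm, show m - (j + 1 + 1) = m - 1 - (j + 1) by omega]
            exact ih (m - 1)
    · calc ⁅⁅upperCentralSeries G m, (⊤ : Subgroup G).lowerCentralSeries j⁆, ⊤⁆
          ≤ ⁅upperCentralSeries G (m - (j + 1)), ⊤⁆ := by
            rw [commutator_comm (upperCentralSeries G m)]
            exact commutator_mono (ih m) le_rfl
        _ ≤ upperCentralSeries G (m - (j + 1 + 1)) :=
            commutator_upperCentralSeries_top_le_sub_one _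

lemma commutatorElement_pow_mem_upperCentralSeries {y a : G} {m t : ℕ}
    (h : ⁅y, a⁆ ∈ upperCentralSeries G (m + 1)) (ha : a ^ t = 1) :
    ⁅y ^ t, a⁆ ∈ upperCentralSeries G m := by
  let π := mk' (upperCentralSeries G m)
  have hcenter : ⁅π y, π a⁆ ∈ center _ := by
    rw [← map_commutatorElement, ← mem_comap, ← upperCentralSeriesStep_eq_comap_center]
    exact h
  rw [← eq_one_iff, ← coe_mk', map_commutatorElement, map_pow,
    commutatorElement_pow_left_of_mem_center hcenter,
    ← commutatorElement_pow_right_of_mem_center hcenter, ← map_pow, ha, map_one,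
    commutatorElement_one_right]

lemma commutatorElement_pow_pow_mem_upperCentralSeries {p m : ℕ} {y a : G}
    (h : ⁅y, a⁆ ∈ upperCentralSeries G m) (ha : a ^ p = 1) :
    ∀ k : ℕ, ⁅y ^ p ^ k, a⁆ ∈ upperCentralSeries G (m - k)
  | 0 => by simpa using h
  | k + 1 => by
    have hk := upperCentralSeries_mono G (by omega : m - k ≤ m - (k + 1) + 1)
      (commutatorElement_pow_pow_mem_upperCentralSeries h ha k)
    rw [pow_succ, pow_mul]
    exact commutatorElement_pow_mem_upperCentralSeries hk ha

end Subgroup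

section LowerPSeries

variable {G : Type*} [Group G]

lemma commutator_lam_le_upperCentralSeries {p n : ℕ} {N : Subgroup G}
    (hNZ : N ≤ Subgroup.upperCentralSeries G n) (hexp : ∀ x ∈ N, x ^ p = 1) (i : ℕ) :
    ⁅lam p G i, N⁆ ≤ Subgroup.upperCentralSeries G (n - i) := by
  rw [Subgroup.commutator_le_iff_le_comap_centralizer]
  refine iSup₂_le fun j hj => Subgroup.commutator_le_iff_le_comap_centralizer.mp ?_
  obtain ⟨hj1, hji⟩ := Finset.mem_Icc.mp hj
  refine Subgroup.commutator_closure_le ?_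
  rintro _ ⟨x, hx, rfl⟩ a ha
  have hxa : ⁅x, a⁆ ∈ Subgroup.upperCentralSeries G (n - j) := by
    rw [show n - j = n - (j - 1 + 1) by omega]
    exact Subgroup.commutator_lowerCentralSeries_upperCentralSeries_le (j - 1) n
      (Subgroup.commutator_mem_commutator hx (hNZ ha))
  rw [show n - i = n - j - (i - j) by omega]
  exact Subgroup.commutatorElement_pow_pow_mem_upperCentralSeries hxa (hexp a ha) (i - j)

lemma itCom_le_upperCentralSeries {A : Subgroup G} {m : ℕ}
    (h : A ≤ Subgroup.upperCentralSeries G m) :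
    ∀ k : ℕ, itCom A k ≤ Subgroup.upperCentralSeries G (m - k)
  | 0 => h
  | k + 1 =>
    (Subgroup.commutator_mono (itCom_le_upperCentralSeries h k) le_rfl).trans
      (Subgroup.commutator_upperCentralSeries_top_le_sub_one (m - k))

lemma itCom_eq_bot_of_le_upperCentralSeries {A : Subgroup G} {k : ℕ}
    (h : A ≤ Subgroup.upperCentralSeries G k) : itCom A k = ⊥ := by
  simpa using itCom_le_upperCentralSeries h k

end LowerPSeries

theorem stmt_16_general {p : ℕ} {G : Type*} [Group G] (n : ℕ)
    (N : Subgroup G) (hNZ : N ≤ upperCentralSeries G n)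
    (hexp : ∀ x ∈ N, x ^ p = 1) :
    (∀ i, 1 ≤ i → i ≤ n → itCom ⁅lam p G i, N⁆ (n - i) = ⊥) ∧ itCom N n = ⊥ :=
  ⟨fun i _ _ => itCom_eq_bot_of_le_upperCentralSeries
      (commutator_lam_le_upperCentralSeries hNZ hexp i),
    itCom_eq_bot_of_le_upperCentralSeries hNZ⟩

theorem stmt_16 {p : ℕ} (hp : p.Prime) {G : Type*} [Group G] (n : ℕ)
    (N : Subgroup G) (hN : N.Normal) (hNZ : N ≤ upperCentralSeries G n)
    (hexp : ∀ x ∈ N, x ^ p = 1) :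
    (∀ i, 1 ≤ i → i ≤ n → itCom ⁅lam p G i, N⁆ (n - i) = ⊥) ∧ itCom N n = ⊥ :=
  stmt_16_general n N hNZ hexp
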